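/- arXiv:0805.1609 — 4 statements merged into one kernel-verified Lean document; each statement's English description precedes it below -/
import Mathlib

section
/- If X is a topological space, then for every k the singular homology module H_k(X × [-1,1], X × {-1,1}; R) is isomorphic to H_{k-1}(X; R). -/
/-! Basic framework: pairs of topological spaces, maps of pairs, homotopies of
maps of pairs, and Eilenberg–Steenrod homology theories. -/

/-- A pair `(X, A)` consisting of a topological space and a subset. -/
structure TopPair' where
  carrier : Type
  [topinst : TopologicalSpace carrier]
  sub : Set carrier

attribute [instance] TopPair'.topinst

/-- The pair `(X, A)`. -/
def TopPair'.of (X : Type) [TopologicalSpace X] (A : Set X) : TopPair' :=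
  { carrier := X, sub := A }

/-- The pair `(X, ∅)`. -/
def TopPair'.plain (X : Type) [TopologicalSpace X] : TopPair' :=
  { carrier := X, sub := (∅ : Set X) }

/-- A continuous map of pairs. -/
structure PairMap (P Q : TopPair') where
  toFun : P.carrier → Q.carrier
  continuous : Continuous toFun
  mapsTo : Set.MapsTo toFun P.sub Q.sub

/-- The identity map of pairs. -/
def PairMap.id (P : TopPair') : PairMap P P :=
  ⟨_root_.id, continuous_id, fun _ h => h⟩

/-- Composition of maps of pairs. -/
def PairMap.comp {P Q S : TopPair'} (g : PairMap Q S) (f : PairMap P Q) : PairMap P S :=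
  ⟨g.toFun ∘ f.toFun, g.continuous.comp f.continuous, g.mapsTo.comp f.mapsTo⟩

/-- The inclusion `(A, ∅) → (X, ∅)` of the subspace of a pair. -/
def TopPair'.subIncl (P : TopPair') : PairMap (TopPair'.plain ↥P.sub) (TopPair'.plain P.carrier) :=
  ⟨Subtype.val, continuous_subtype_val, fun _ h => h.elim⟩

/-- The inclusion `(X, ∅) → (X, A)`. -/
def TopPair'.totalIncl (P : TopPair') : PairMap (TopPair'.plain P.carrier) P :=
  ⟨_root_.id, continuous_id, fun _ h => h.elim⟩

/-- Restriction of a map of pairs to the subspaces. -/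
def PairMap.subRestrict {P Q : TopPair'} (f : PairMap P Q) :
    PairMap (TopPair'.plain ↥P.sub) (TopPair'.plain ↥Q.sub) :=
  ⟨fun x => ⟨f.toFun x.1, f.mapsTo x.2⟩,
    (f.continuous.comp continuous_subtype_val).subtype_mk _, fun _ h => h.elim⟩

/-- The pair `(X ∖ U, A ∖ U)` obtained by excising `U` from the pair `P = (X, A)`. -/
def TopPair'.excise (P : TopPair') (U : Set P.carrier) : TopPair' :=
  { carrier := ↥(Uᶜ), sub := Subtype.val ⁻¹' P.sub }

/-- The inclusion `(X ∖ U, A ∖ U) → (X, A)`. -/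
def TopPair'.excisionMap (P : TopPair') (U : Set P.carrier) : PairMap (P.excise U) P :=
  ⟨Subtype.val, continuous_subtype_val, fun _ h => h⟩

/-- Homotopy of maps of pairs. -/
def PairHomotopic {P Q : TopPair'} (f g : PairMap P Q) : Prop :=
  ∃ F : P.carrier × ℝ → Q.carrier, Continuous F ∧
    (∀ x, F (x, 0) = f.toFun x) ∧ (∀ x, F (x, 1) = g.toFun x) ∧
    ∀ x ∈ P.sub, ∀ t : ℝ, F (x, t) ∈ Q.sub

/-- An (ordinary, singular-homology-like) homology theory with coefficients in `R`:
a functor on pairs of topological spaces satisfying the Eilenberg–Steenrod axioms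
(homotopy invariance, exactness of the long exact sequence of a pair, excision and
the dimension axiom, with coefficients `H₀(pt) ≅ R`).  Singular homology with
coefficients in `R` is such a theory. -/
structure HomologyTheory (R : Type) [CommRing R] where
  H : ℤ → TopPair' → Type
  [instAddCommGroup : ∀ k P, AddCommGroup (H k P)]
  [instModule : ∀ k P, Module R (H k P)]
  map : ∀ {P Q : TopPair'}, PairMap P Q → ∀ k : ℤ, H k P →ₗ[R] H k Q
  map_id : ∀ (P : TopPair') (k : ℤ), map (PairMap.id P) k = LinearMap.id
  map_comp : ∀ {P Q S : TopPair'} (f : PairMap P Q) (g : PairMap Q S) (k : ℤ),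
    map (g.comp f) k = (map g k).comp (map f k)
  homotopy_invariance : ∀ {P Q : TopPair'} (f g : PairMap P Q),
    PairHomotopic f g → ∀ k, map f k = map g k
  boundary : ∀ (P : TopPair') (k : ℤ), H k P →ₗ[R] H (k - 1) (TopPair'.plain ↥P.sub)
  boundary_natural : ∀ {P Q : TopPair'} (f : PairMap P Q) (k : ℤ),
    (boundary Q k).comp (map f k) = (map f.subRestrict (k - 1)).comp (boundary P k)
  exact_sub_total : ∀ (P : TopPair') (k : ℤ),
    Function.Exact (map P.subIncl k) (map P.totalIncl k)
  exact_total_pair : ∀ (P : TopPair') (k : ℤ),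
    Function.Exact (map P.totalIncl k) (boundary P k)
  exact_pair_sub : ∀ (P : TopPair') (k : ℤ),
    Function.Exact (boundary P k) (map P.subIncl (k - 1))
  excision : ∀ (P : TopPair') (U : Set P.carrier), closure U ⊆ interior P.sub →
    ∀ k, Function.Bijective (map (P.excisionMap U) k)
  dimension : ∀ k : ℤ, k ≠ 0 → Subsingleton (H k (TopPair'.plain PUnit))
  dim_coeff : Nonempty (H 0 (TopPair'.plain PUnit) ≃ₗ[R] R)

attribute [instance] HomologyTheory.instAddCommGroup HomologyTheory.instModule

/-! The top end `X × {1}` is a deformation retract of the cylinder, so `H_k` of the ends maps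
onto `H_k` of the cylinder and the connecting map identifies `H_k(X × [-1,1], X × {-1,1})` with
the kernel of `H_{k-1}(X × {-1,1}) → H_{k-1}(X × [-1,1])`. Excising the clopen bottom end splits
`H(X × {-1,1}) ≅ H(X) ⊕ H(X)`, and as both ends are homotopic inclusions that map becomes
`(x, y) ↦ x + y`. Its kernel is the antidiagonal, parametrised by `x ↦ top_* x - bot_* x`. -/

@[ext]
theorem PairMap.ext {P Q : TopPair'} {f g : PairMap P Q} (h : f.toFun = g.toFun) : f = g := by
  cases f; cases g; cases h; rfl

theorem PairHomotopic.of_fst_eq {Z Y : Type} [TopologicalSpace Z] [TopologicalSpace Y]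
    {a b : ℝ} (hab : a ≤ b)
    (f g : PairMap (TopPair'.plain Z) (TopPair'.plain (Y × Set.Icc a b)))
    (h : ∀ z, (f.toFun z).1 = (g.toFun z).1) : PairHomotopic f g := by
  -- Straight line in the interval factor; `projIcc` clamps it, as the time parameter is real.
  refine ⟨fun q => ((f.toFun q.1).1,
    Set.projIcc a b hab ((1 - q.2) * (f.toFun q.1).2 + q.2 * (g.toFun q.1).2)), ?_, ?_, ?_, ?_⟩
  · have hf : Continuous fun q : Z × ℝ => f.toFun q.1 := f.continuous.comp continuous_fst
    have hg : Continuous fun q : Z × ℝ => g.toFun q.1 := g.continuous.comp continuous_fst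
    fun_prop
  · intro z
    simp only [sub_zero, one_mul, zero_mul, add_zero, Set.projIcc_val]
    rfl
  · intro z
    simp only [sub_self, zero_mul, one_mul, zero_add, Set.projIcc_val, h]
    rfl
  · intro _ h
    exact h.elim

def PairMap.subtypeVal {Y : Type} [TopologicalSpace Y] (s : Set Y) :
    PairMap (TopPair'.plain ↥s) (TopPair'.plain Y) :=
  ⟨Subtype.val, continuous_subtype_val, fun _ h => h.elim⟩

theorem IsClopen.closure_subset_interior {Y : Type} [TopologicalSpace Y] {B : Set Y}
    (hB : IsClopen B) : closure B ⊆ interior B := by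
  rw [hB.isClosed.closure_eq, hB.isOpen.interior_eq]

theorem LinearMap.range_eq_ker_of_leftInverse_of_disjoint {R M N L : Type} [Ring R]
    [AddCommGroup M] [AddCommGroup N] [AddCommGroup L] [Module R M] [Module R N] [Module R L]
    {d : M →ₗ[R] N} {π : N →ₗ[R] M} {i : N →ₗ[R] L} (hπd : Function.LeftInverse π d)
    (hid : i ∘ₗ d = 0) (hker : Disjoint (LinearMap.ker i) (LinearMap.ker π)) :
    LinearMap.range d = LinearMap.ker i := by
  refine le_antisymm (LinearMap.range_le_ker_iff.mpr hid) fun n (hn : i n = 0) => ?_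
  have hid' (x : M) : i (d x) = 0 := LinearMap.congr_fun hid x
  -- `n - d (π n)` lies in both kernels.
  refine ⟨π n, eq_comm.mp (sub_eq_zero.mp (Submodule.disjoint_def.mp hker _ ?_ ?_))⟩
  · rw [LinearMap.mem_ker, map_sub, hn, hid', sub_zero]
  · rw [LinearMap.mem_ker, map_sub, hπd, sub_self]

namespace HomologyTheory

variable {R : Type} [CommRing R] (T : HomologyTheory R)

theorem map_comp_apply {P Q S : TopPair'} (f : PairMap P Q) (g : PairMap Q S) (k : ℤ)
    (x : T.H k P) : T.map (g.comp f) k x = T.map g k (T.map f k x) := by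
  rw [T.map_comp]
  rfl

theorem map_leftInverse {P Q : TopPair'} {f : PairMap P Q} {g : PairMap Q P}
    (h : g.comp f = PairMap.id P) (k : ℤ) : Function.LeftInverse (T.map g k) (T.map f k) :=
  fun x => by rw [← map_comp_apply, h, T.map_id]; rfl

theorem map_surjective_of_homotopic_id {P Q : TopPair'} {f : PairMap P Q} {g : PairMap Q P}
    (h : PairHomotopic (f.comp g) (PairMap.id Q)) (k : ℤ) : Function.Surjective (T.map f k) :=
  fun y => ⟨T.map g k y, by rw [← map_comp_apply, T.homotopy_invariance _ _ h, T.map_id]; rfl⟩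

noncomputable def boundaryEquivKer (P : TopPair') (k : ℤ)
    (h : Function.Surjective (T.map P.subIncl k)) :
    T.H k P ≃ₗ[R] LinearMap.ker (T.map P.subIncl (k - 1)) :=
  have hinj : Function.Injective (T.boundary P k) := by
    refine (injective_iff_map_eq_zero _).mpr fun a ha => ?_
    obtain ⟨x, rfl⟩ := (T.exact_total_pair P k a).mp ha
    obtain ⟨y, rfl⟩ := h x
    exact (T.exact_sub_total P k).apply_apply_eq_zero y
  (LinearEquiv.ofInjective _ hinj).trans
    (LinearEquiv.ofEq _ _ (LinearMap.exact_iff.mp (T.exact_pair_sub P k)).symm)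

noncomputable def excisionEquiv (P : TopPair') (U : Set P.carrier)
    (hU : closure U ⊆ interior P.sub) (k : ℤ) : T.H k (P.excise U) ≃ₗ[R] T.H k P :=
  LinearEquiv.ofBijective _ (T.excision P U hU k)

@[simp]
theorem excisionEquiv_apply (P : TopPair') (U : Set P.carrier)
    (hU : closure U ⊆ interior P.sub) (k : ℤ) (x : T.H k (P.excise U)) :
    T.excisionEquiv P U hU k x = T.map (P.excisionMap U) k x := rfl

def excisedToPlain (P : TopPair') :
    PairMap (P.excise P.sub) (TopPair'.plain ↥P.subᶜ) :=
  ⟨_root_.id, continuous_id, fun y hy => absurd hy y.2⟩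

def plainToExcised (P : TopPair') :
    PairMap (TopPair'.plain ↥P.subᶜ) (P.excise P.sub) :=
  ⟨_root_.id, continuous_id, fun _ h => h.elim⟩

section Clopen

variable {P : TopPair'}

/-- The projection of `H(X) ≅ H(A) ⊕ H(X ∖ A)` onto its second summand, for clopen `A`. -/
noncomputable def restrictCompl (hP : IsClopen P.sub) (k : ℤ) :
    T.H k (TopPair'.plain P.carrier) →ₗ[R] T.H k (TopPair'.plain ↥P.subᶜ) :=
  T.map (excisedToPlain P) k ∘ₗ
    (T.excisionEquiv P P.sub hP.closure_subset_interior k).symm.toLinearMap ∘ₗ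
    T.map P.totalIncl k

theorem restrictCompl_apply (hP : IsClopen P.sub) (k : ℤ)
    (y : T.H k (TopPair'.plain P.carrier)) :
    T.restrictCompl hP k y = T.map (excisedToPlain P) k
      ((T.excisionEquiv P P.sub hP.closure_subset_interior k).symm (T.map P.totalIncl k y)) :=
  rfl

theorem restrictCompl_map_subtypeVal_compl (hP : IsClopen P.sub) (k : ℤ)
    (x : T.H k (TopPair'.plain ↥P.subᶜ)) :
    T.restrictCompl hP k (T.map (PairMap.subtypeVal P.subᶜ) k x) = x := by
  have hfactor : P.totalIncl.comp (PairMap.subtypeVal P.subᶜ) =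
      (P.excisionMap P.sub).comp (plainToExcised P) := rfl
  rw [restrictCompl_apply, ← map_comp_apply, hfactor, map_comp_apply,
    ← T.excisionEquiv_apply P P.sub hP.closure_subset_interior,
    LinearEquiv.symm_apply_apply]
  exact T.map_leftInverse (f := plainToExcised P) rfl k x

theorem restrictCompl_eq_zero_iff (hP : IsClopen P.sub) (k : ℤ)
    (y : T.H k (TopPair'.plain P.carrier)) :
    T.restrictCompl hP k y = 0 ↔ y ∈ Set.range (T.map P.subIncl k) := by
  have hinj : Function.Injective (T.map (excisedToPlain P) k) :=
    (T.map_leftInverse (g := plainToExcised P) rfl k).injective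
  rw [restrictCompl_apply, hinj.eq_iff' (map_zero _), LinearEquiv.map_eq_zero_iff]
  exact T.exact_sub_total P k y

end Clopen

end HomologyTheory

namespace Cylinder

variable (X : Type) [TopologicalSpace X]

abbrev ends : Set (X × Set.Icc (-1 : ℝ) 1) := {p | (p.2 : ℝ) = -1 ∨ (p.2 : ℝ) = 1}

abbrev cylPair : TopPair' := { carrier := X × Set.Icc (-1 : ℝ) 1, sub := ends X }

abbrev endsPair : TopPair' := { carrier := ↥(ends X), sub := {e | (e.1.2 : ℝ) = -1} }

theorem isClopen_bottom : IsClopen (endsPair X).sub := by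
  have hcont : Continuous fun e : ends X => (e.1.2 : ℝ) := by fun_prop
  have hIio : (endsPair X).sub = (fun e : ends X => (e.1.2 : ℝ)) ⁻¹' Set.Iio 0 := by
    ext ⟨p, hp | hp⟩ <;> norm_num [hp]
  exact ⟨isClosed_singleton.preimage hcont, hIio ▸ isOpen_Iio.preimage hcont⟩

def proj : PairMap (TopPair'.plain (X × Set.Icc (-1 : ℝ) 1)) (TopPair'.plain X) :=
  ⟨Prod.fst, continuous_fst, fun _ h => h.elim⟩

def toBottom : PairMap (TopPair'.plain X) (TopPair'.plain ↥(endsPair X).sub) :=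
  ⟨fun x => ⟨⟨(x, ⟨-1, by norm_num⟩), Or.inl rfl⟩, rfl⟩, by fun_prop,
    fun _ h => h.elim⟩

def toTop : PairMap (TopPair'.plain X) (TopPair'.plain ↥(endsPair X).subᶜ) :=
  ⟨fun x => ⟨⟨(x, ⟨1, by norm_num⟩), Or.inr rfl⟩, by norm_num⟩, by fun_prop,
    fun _ h => h.elim⟩

def inclBottom : PairMap (TopPair'.plain X) (TopPair'.plain ↥(ends X)) :=
  (endsPair X).subIncl.comp (toBottom X)

def inclTop : PairMap (TopPair'.plain X) (TopPair'.plain ↥(ends X)) :=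
  (PairMap.subtypeVal _).comp (toTop X)

def fromTop : PairMap (TopPair'.plain ↥(endsPair X).subᶜ) (TopPair'.plain X) :=
  (proj X).comp ((cylPair X).subIncl.comp (PairMap.subtypeVal _))

theorem fromTop_comp_toTop : (fromTop X).comp (toTop X) = PairMap.id _ := rfl

theorem toTop_comp_fromTop : (toTop X).comp (fromTop X) = PairMap.id _ := by
  ext ⟨⟨p, hp | hp⟩, hbot⟩
  · exact absurd hp hbot
  · exact Subtype.ext (Subtype.ext (Prod.ext rfl (Subtype.ext hp.symm)))

theorem toBottom_comp_proj_comp_subIncl :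
    ((toBottom X).comp (proj X)).comp ((cylPair X).subIncl.comp (endsPair X).subIncl) =
      PairMap.id _ := by
  ext ⟨⟨p, _⟩, hp⟩
  exact Subtype.ext (Subtype.ext (Prod.ext rfl (Subtype.ext hp.symm)))

theorem inclTop_comp_proj_homotopic_id :
    PairHomotopic (((cylPair X).subIncl.comp (inclTop X)).comp (proj X)) (PairMap.id _) :=
  PairHomotopic.of_fst_eq (by norm_num) _ _ fun _ => rfl

theorem inclBottom_homotopic_inclTop :
    PairHomotopic ((cylPair X).subIncl.comp (inclBottom X))
      ((cylPair X).subIncl.comp (inclTop X)) :=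
  PairHomotopic.of_fst_eq (by norm_num) _ _ fun _ => rfl

section Homology

variable {R : Type} [CommRing R] (T : HomologyTheory R) (k : ℤ)

theorem map_subIncl_surjective : Function.Surjective (T.map (cylPair X).subIncl k) := by
  intro y
  obtain ⟨x, rfl⟩ := T.map_surjective_of_homotopic_id (inclTop_comp_proj_homotopic_id X) k y
  exact ⟨T.map (inclTop X) k x, (T.map_comp_apply _ _ k x).symm⟩

noncomputable def endsDiff :
    T.H k (TopPair'.plain X) →ₗ[R] T.H k (TopPair'.plain ↥(ends X)) :=
  T.map (inclTop X) k - T.map (inclBottom X) k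

noncomputable def topComponent :
    T.H k (TopPair'.plain ↥(ends X)) →ₗ[R] T.H k (TopPair'.plain X) :=
  T.map (fromTop X) k ∘ₗ T.restrictCompl (isClopen_bottom X) k

theorem topComponent_map_inclTop (x : T.H k (TopPair'.plain X)) :
    topComponent X T k (T.map (inclTop X) k x) = x := by
  rw [topComponent, LinearMap.comp_apply, inclTop, T.map_comp_apply,
    T.restrictCompl_map_subtypeVal_compl]
  exact T.map_leftInverse (fromTop_comp_toTop X) k x

theorem topComponent_map_inclBottom (x : T.H k (TopPair'.plain X)) :
    topComponent X T k (T.map (inclBottom X) k x) = 0 := by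
  have hres : T.restrictCompl (isClopen_bottom X) k (T.map (inclBottom X) k x) = 0 :=
    (T.restrictCompl_eq_zero_iff (isClopen_bottom X) k _).mpr
      ⟨T.map (toBottom X) k x, (T.map_comp_apply _ _ k x).symm⟩
  rw [topComponent, LinearMap.comp_apply, hres, map_zero]

theorem leftInverse_topComponent_endsDiff :
    Function.LeftInverse (topComponent X T k) (endsDiff X T k) := fun x => by
  rw [endsDiff, LinearMap.sub_apply, map_sub, topComponent_map_inclTop,
    topComponent_map_inclBottom, sub_zero]

theorem map_subIncl_comp_endsDiff : T.map (cylPair X).subIncl k ∘ₗ endsDiff X T k = 0 := by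
  ext x
  rw [LinearMap.comp_apply, endsDiff, LinearMap.sub_apply, map_sub, ← T.map_comp_apply,
    ← T.map_comp_apply, T.homotopy_invariance _ _ (inclBottom_homotopic_inclTop X), sub_self,
    LinearMap.zero_apply]

theorem disjoint_ker_map_subIncl_ker_topComponent :
    Disjoint (LinearMap.ker (T.map (cylPair X).subIncl k))
      (LinearMap.ker (topComponent X T k)) := by
  refine Submodule.disjoint_def.mpr fun b hb htop => ?_
  have hinj : Function.Injective (T.map (fromTop X) k) :=
    (T.map_leftInverse (toTop_comp_fromTop X) k).injective
  have hres : T.restrictCompl (isClopen_bottom X) k b = 0 :=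
    (hinj.eq_iff' (map_zero _)).mp (LinearMap.mem_ker.mp htop)
  obtain ⟨c, rfl⟩ := (T.restrictCompl_eq_zero_iff (isClopen_bottom X) k b).mp hres
  have hc : c = 0 := by
    rw [← T.map_leftInverse (toBottom_comp_proj_comp_subIncl X) k c,
      T.map_comp_apply (endsPair X).subIncl (cylPair X).subIncl,
      LinearMap.mem_ker.mp hb, map_zero]
  rw [hc, map_zero]

theorem range_endsDiff :
    LinearMap.range (endsDiff X T k) = LinearMap.ker (T.map (cylPair X).subIncl k) :=
  LinearMap.range_eq_ker_of_leftInverse_of_disjoint (leftInverse_topComponent_endsDiff X T k)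
    (map_subIncl_comp_endsDiff X T k) (disjoint_ker_map_subIncl_ker_topComponent X T k)

end Homology

end Cylinder

/-- For any topological space `X`, any commutative ring `R` and any `k`,
the singular homology module `H_k(X × [-1,1], X × {-1,1}; R)` is isomorphic to
`H_{k-1}(X; R)`.  (Quantified over all homology theories satisfying the
Eilenberg–Steenrod axioms; singular homology with coefficients in `R` is one.) -/
theorem homology_of_cylinder_mod_ends (R : Type) [CommRing R] (T : HomologyTheory R)
    (X : Type) [TopologicalSpace X] (k : ℤ) :
    Nonempty
      (T.H k (TopPair'.of (X × ↥(Set.Icc (-1 : ℝ) 1))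
          {p : X × ↥(Set.Icc (-1 : ℝ) 1) | (p.2 : ℝ) = -1 ∨ (p.2 : ℝ) = 1})
        ≃ₗ[R] T.H (k - 1) (TopPair'.plain X)) := by
  let boundaryIso :=
    T.boundaryEquivKer (Cylinder.cylPair X) k (Cylinder.map_subIncl_surjective X T k)
  let endsDiffIso :=
    (LinearEquiv.ofLeftInverse (Cylinder.leftInverse_topComponent_endsDiff X T (k - 1))).trans
      (LinearEquiv.ofEq _ _ (Cylinder.range_endsDiff X T (k - 1)))
  exact ⟨boundaryIso.trans endsDiffIso.symm⟩
end

section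
/- Let φ be a continuous flow on a Hausdorff topological space M and let x ∈ M. If the positive prolongational limit set J⁺(x) possesses a compact neighbourhood, then J⁺(x) is connected. -/
open Set

variable {M : Type} [TopologicalSpace M]

/-- The image set `A · S = {φ(x,t) : x ∈ A, t ∈ S}` of a set of points and a set of
times under a flow. -/
def flowImage (φ : Flow ℝ M) (A : Set M) (S : Set ℝ) : Set M :=
  {y | ∃ x ∈ A, ∃ t ∈ S, φ t x = y}

/-- `U` is an open neighbourhood of `x` in `A`, i.e. a relatively open subset of `A`
containing `x`. -/
def IsRelOpenNbhd (A : Set M) (x : M) (U : Set M) : Prop :=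
  x ∈ U ∧ ∃ V : Set M, IsOpen V ∧ U = V ∩ A

/-- The positive prolongational limit set of `x` relative to `A`:
`J⁺(x, A) = ⋂_{U, t ≥ 0} closure (U · [t, ∞))`, `U` ranging over the open
neighbourhoods of `x` in `A`. -/
def jPlusRel (φ : Flow ℝ M) (A : Set M) (x : M) : Set M :=
  ⋂ (U : Set M) (_ : IsRelOpenNbhd A x U) (t : ℝ) (_ : 0 ≤ t),
    closure (flowImage φ U (Ici t))

/-- The positive prolongational limit set `J⁺(x) = J⁺(x, M)`. -/
def jPlus (φ : Flow ℝ M) (x : M) : Set M := jPlusRel φ univ x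

/-- The negative prolongational limit set of `x` relative to `A`:
`J⁻(x, A) = ⋂_{U, t ≥ 0} closure (U · (-∞, -t])`. -/
def jMinusRel (φ : Flow ℝ M) (A : Set M) (x : M) : Set M :=
  ⋂ (U : Set M) (_ : IsRelOpenNbhd A x U) (t : ℝ) (_ : 0 ≤ t),
    closure (flowImage φ U (Iic (-t)))

/-- The negative prolongational limit set `J⁻(x) = J⁻(x, M)`. -/
def jMinus (φ : Flow ℝ M) (x : M) : Set M := jMinusRel φ univ x

/-- Let `φ` be a continuous flow on a Hausdorff topological space `M`
and `x ∈ M`.  If the positive prolongational limit set `J⁺(x)` possesses a compact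
neighbourhood, then `J⁺(x)` is connected (preconnected, to allow for the degenerate
empty case). -/
theorem jPlus_connected_of_compact_nbhd [T2Space M] (φ : Flow ℝ M) (x : M)
    (Q : Set M) (hQc : IsCompact Q) (hQn : Q ∈ nhdsSet (jPlus φ x)) :
    IsPreconnected (jPlus φ x) := by
  set J := jPlus φ x with hJdef
  have hmem : ∀ y, y ∈ J ↔ ∀ U : Set M, IsOpen U → x ∈ U →
      ∀ t : ℝ, 0 ≤ t → y ∈ closure (flowImage φ U (Ici t)) := by
    intro y
    simp only [hJdef, jPlus, jPlusRel, mem_iInter]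
    constructor
    · intro h U hU hxU t ht
      exact h U ⟨hxU, U, hU, (inter_univ U).symm⟩ t ht
    · rintro h U ⟨hxU, V, hV, rfl⟩ t ht
      exact h (V ∩ univ) (by rw [inter_univ]; exact hV) hxU t ht
  have hJclosed : IsClosed J := by
    rw [hJdef]
    exact isClosed_iInter fun U => isClosed_iInter fun _ => isClosed_iInter fun t =>
      isClosed_iInter fun _ => isClosed_closure
  have hJQ : J ⊆ interior Q := subset_interior_iff_mem_nhdsSet.mpr hQn
  have hJcomp : IsCompact J := hQc.of_isClosed_subset hJclosed (hJQ.trans interior_subset)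
  rintro u v hu hv hsub ⟨a, haJ, hau⟩ ⟨b, hbJ, hbv⟩
  by_contra hne
  have hnot : ∀ z, z ∈ J → z ∈ u → z ∈ v → False := fun z hz h1 h2 => hne ⟨z, hz, h1, h2⟩
  have haP : a ∈ J \ v := ⟨haJ, fun hv' => hnot a haJ hau hv'⟩
  have hbQ' : b ∈ J \ u := ⟨hbJ, fun hu' => hnot b hbJ hu' hbv⟩
  have hPc : IsCompact (J \ v) := hJcomp.diff hv
  have hQ'c : IsCompact (J \ u) := hJcomp.diff hu
  have hdisj : Disjoint (J \ v) (J \ u) := by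
    rw [disjoint_left]
    rintro z ⟨hzJ, hzv⟩ ⟨_, hzu⟩
    rcases hsub hzJ with h | h
    exacts [hzu h, hzv h]
  obtain ⟨Vp, Vq, hVp, hVq, hPVp, hQVq, hVdisj⟩ :=
    SeparatedNhds.of_isCompact_isCompact hPc hQ'c hdisj
  set A1 := interior Q ∩ Vp with hA1def
  set A2 := interior Q ∩ Vq with hA2def
  have hA1 : IsOpen A1 := isOpen_interior.inter hVp
  have hA2 : IsOpen A2 := isOpen_interior.inter hVq
  have hQop : IsOpen Qᶜ := hQc.isClosed.isOpen_compl
  have hJO : J ⊆ A1 ∪ A2 := by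
    intro z hz
    rcases hsub hz with h | h
    · exact Or.inl ⟨hJQ hz, hPVp ⟨hz, fun h2 => hnot z hz h h2⟩⟩
    · exact Or.inr ⟨hJQ hz, hQVq ⟨hz, fun h2 => hnot z hz h2 h⟩⟩
  set K := Q \ (A1 ∪ A2) with hKdef
  have hKc : IsCompact K := hQc.diff (hA1.union hA2)
  have hKJ : ∀ z ∈ K, z ∉ J := fun z hz hzJ => hz.2 (hJO hzJ)
  -- step 4: a uniform neighbourhood avoiding K
  obtain ⟨U, t, hUopen, hxU, ht0, hsafe⟩ : ∃ (U : Set M) (t : ℝ), IsOpen U ∧ x ∈ U ∧ 0 ≤ t ∧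
      ∀ u0 ∈ U, ∀ s : ℝ, t ≤ s → φ s u0 ∉ K := by
    have hex : ∀ z ∈ K, ∃ (W : Set M) (r : ℝ), IsOpen W ∧ x ∈ W ∧ 0 ≤ r ∧
        z ∉ closure (flowImage φ W (Ici r)) := by
      intro z hz
      by_contra hcon
      push_neg at hcon
      exact hKJ z hz ((hmem z).mpr fun W hW hxW r hr => hcon W r hW hxW hr)
    choose! W r hWopen hxW hr0 hzout using hex
    have hcover : K ⊆ ⋃ z ∈ K, (closure (flowImage φ (W z) (Ici (r z))))ᶜ := fun z hz =>
      mem_biUnion hz (hzout z hz)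
    obtain ⟨b', hb'K, hb'fin, hb'cov⟩ := hKc.elim_finite_subcover_image
      (fun z _ => isClosed_closure.isOpen_compl) hcover
    obtain ⟨t, ht0, htub⟩ : ∃ t : ℝ, 0 ≤ t ∧ ∀ z ∈ b', r z ≤ t := by
      obtain ⟨t0, ht0⟩ := (hb'fin.image r).bddAbove
      exact ⟨max t0 0, le_max_right _ _,
        fun z hz => le_trans (ht0 ⟨z, hz, rfl⟩) (le_max_left _ _)⟩
    refine ⟨⋂ z ∈ b', W z, t, hb'fin.isOpen_biInter (fun z hz => hWopen z (hb'K hz)),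
      mem_iInter₂.mpr (fun z hz => hxW z (hb'K hz)), ht0, ?_⟩
    intro u0 hu0 s hs hmemK
    obtain ⟨z, hzb', hznot⟩ := mem_iUnion₂.mp (hb'cov hmemK)
    exact hznot (subset_closure
      ⟨u0, (mem_iInter₂.mp hu0) z hzb', s, le_trans (htub z hzb') hs, rfl⟩)
  have hKcomp : ∀ w : M, w ∉ K → w ∈ A1 ∪ (A2 ∪ Qᶜ) := by
    intro w hw
    by_cases hwQ : w ∈ Q
    · have hmem12 : w ∈ A1 ∪ A2 := by
        by_contra h
        exact hw ⟨hwQ, h⟩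
      rcases hmem12 with h | h
      · exact Or.inl h
      · exact Or.inr (Or.inl h)
    · exact Or.inr (Or.inr hwQ)
  -- basic disjointness facts
  have hA1A2 : A1 ∩ A2 = ∅ := by
    apply eq_empty_iff_forall_notMem.mpr
    rintro z ⟨⟨_, hp⟩, _, hq⟩
    exact disjoint_left.mp hVdisj hp hq
  have hA1Qc : A1 ∩ Qᶜ = ∅ := by
    apply eq_empty_iff_forall_notMem.mpr
    rintro z ⟨⟨hi, _⟩, hc⟩
    exact hc (interior_subset hi)
  have hA2Qc : A2 ∩ Qᶜ = ∅ := by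
    apply eq_empty_iff_forall_notMem.mpr
    rintro z ⟨⟨hi, _⟩, hc⟩
    exact hc (interior_subset hi)
  -- orbit segments are trapped in one of the disjoint open sets
  have horbit : ∀ (C D : Set M), IsOpen C → IsOpen D → C ∩ D = ∅ →
      ∀ u0 : M, (∀ s : ℝ, t ≤ s → φ s u0 ∈ C ∪ D) → φ t u0 ∈ C →
      ∀ s : ℝ, t ≤ s → φ s u0 ∈ C := by
    intro C D hC hD hCD u0 hall htC s hs
    by_contra hsC
    have hsD : φ s u0 ∈ D := (hall s hs).resolve_left hsC
    have hconn : IsPreconnected ((fun r => φ r u0) '' Ici t) :=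
      isPreconnected_Ici.image _ (φ.continuous continuous_id continuous_const).continuousOn
    obtain ⟨z, hz⟩ := hconn C D hC hD (by rintro _ ⟨r, hr, rfl⟩; exact hall r hr)
      ⟨φ t u0, ⟨t, le_refl t, rfl⟩, htC⟩ ⟨φ s u0, ⟨s, hs, rfl⟩, hsD⟩
    have := hz.2
    rw [hCD] at this
    exact this
  -- the main contradiction engine
  have main : ∀ (C C' D : Set M), IsOpen C → IsOpen C' → IsOpen D → C ∩ D = ∅ → C ∩ C' = ∅ →
      (∀ u0 ∈ U, ∀ s : ℝ, t ≤ s → φ s u0 ∈ C ∪ D) → φ t x ∈ C →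
      ∀ y ∈ J, y ∈ C' → False := by
    intro C C' D hC hC' hD hCD hCC' hall hxC y hyJ hyC'
    have hNopen : IsOpen (U ∩ (fun z => φ t z) ⁻¹' C) :=
      hUopen.inter (hC.preimage (φ.continuous continuous_const continuous_id))
    have hxN : x ∈ U ∩ (fun z => φ t z) ⁻¹' C := ⟨hxU, hxC⟩
    have himg : ∀ w ∈ flowImage φ (U ∩ (fun z => φ t z) ⁻¹' C) (Ici t), w ∈ C := by
      rintro w ⟨u0, hu0, s, hs, rfl⟩
      exact horbit C D hC hD hCD u0 (fun s' hs' => hall u0 hu0.1 s' hs') hu0.2 s hs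
    have hyc := (hmem y).mp hyJ _ hNopen hxN t ht0
    obtain ⟨z, hzC', hzS⟩ := mem_closure_iff.mp hyc C' hC' hyC'
    exact eq_empty_iff_forall_notMem.mp hCC' z ⟨himg z hzS, hzC'⟩
  have hall1 : ∀ u0 ∈ U, ∀ s : ℝ, t ≤ s → φ s u0 ∈ A1 ∪ (A2 ∪ Qᶜ) :=
    fun u0 hu0 s hs => hKcomp _ (hsafe u0 hu0 s hs)
  have haA1 : a ∈ A1 := ⟨hJQ haJ, hPVp haP⟩
  have hbA2 : b ∈ A2 := ⟨hJQ hbJ, hQVq hbQ'⟩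
  have htri := hall1 x hxU t le_rfl
  rcases htri with h1 | h2 | h3
  · exact main A1 A2 (A2 ∪ Qᶜ) hA1 hA2 (hA2.union hQop)
      (by rw [inter_union_distrib_left, hA1A2, hA1Qc, union_empty]) hA1A2
      hall1 h1 b hbJ hbA2
  · refine main A2 A1 (A1 ∪ Qᶜ) hA2 hA1 (hA1.union hQop)
      (by rw [inter_union_distrib_left, inter_comm A2 A1, hA1A2, hA2Qc, union_empty])
      (by rw [inter_comm]; exact hA1A2) ?_ h2 a haJ haA1
    intro u0 hu0 s hs
    rcases hall1 u0 hu0 s hs with h | h | h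
    · exact Or.inr (Or.inl h)
    · exact Or.inl h
    · exact Or.inr (Or.inr h)
  · refine main Qᶜ A1 (A1 ∪ A2) hQop hA1 (hA1.union hA2)
      (by rw [inter_union_distrib_left, inter_comm Qᶜ A1, hA1Qc, inter_comm Qᶜ A2, hA2Qc,
        union_empty])
      (by rw [inter_comm]; exact hA1Qc) ?_ h3 a haJ haA1
    intro u0 hu0 s hs
    rcases hall1 u0 hu0 s hs with h | h | h
    · exact Or.inr (Or.inl h)
    · exact Or.inr (Or.inr h)
    · exact Or.inl h
end

section
/- Let φ be a continuous flow on a locally compact metric space M and let K be an isolated attractor with only internal explosions (i.e., J⁺(x) ⊆ K for every x in the basin of attraction A(K) with x ∉ K). Then J⁻(x) ⊆ K for every x in the stabilization K̂ with x ∉ K. -/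
open Set

variable {M : Type} [TopologicalSpace M]

/-- The omega limit set `ω(x) = ⋂_t closure (x · [t, ∞))`. -/
def omegaSet (φ : Flow ℝ M) (x : M) : Set M :=
  ⋂ t : ℝ, closure (flowImage φ {x} (Ici t))

/-- The alpha limit set `α(x) = ⋂_t closure (x · (-∞, t])`. -/
def alphaSet (φ : Flow ℝ M) (x : M) : Set M :=
  ⋂ t : ℝ, closure (flowImage φ {x} (Iic t))

/-- A set is invariant under the flow. -/
def FlowInvariant (φ : Flow ℝ M) (K : Set M) : Prop :=
  ∀ t : ℝ, ∀ x ∈ K, φ t x ∈ K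

/-- The stable manifold `W^s(K) = {x : ∅ ≠ ω(x) ⊆ K}`; for an attractor this is its
basin of attraction `𝒜(K)`. -/
def stableSet (φ : Flow ℝ M) (K : Set M) : Set M :=
  {x | (omegaSet φ x).Nonempty ∧ omegaSet φ x ⊆ K}

/-- The unstable manifold `W^u(K) = {x : ∅ ≠ α(x) ⊆ K}`. -/
def unstableSet (φ : Flow ℝ M) (K : Set M) : Set M :=
  {x | (alphaSet φ x).Nonempty ∧ alphaSet φ x ⊆ K}

/-- `K` is an isolated compact invariant set: it has a compact neighbourhood `N` in
which it is the maximal invariant set. -/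
def IsIsolatedInvariant (φ : Flow ℝ M) (K : Set M) : Prop :=
  IsCompact K ∧ FlowInvariant φ K ∧
    ∃ N : Set M, IsCompact N ∧ N ∈ nhdsSet K ∧ K = {x ∈ N | ∀ t : ℝ, φ t x ∈ N}

/-- `K` is an isolated attractor: an isolated compact invariant set whose stable
manifold is a neighbourhood of it. -/
def IsIsolatedAttractor (φ : Flow ℝ M) (K : Set M) : Prop :=
  IsIsolatedInvariant φ K ∧ stableSet φ K ∈ nhdsSet K

/-- The stabilization `K̂ = ⋃_{x ∈ K} J⁺(x)` of an attractor `K`, the smallest stable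
attractor containing `K`. -/
def stabilization (φ : Flow ℝ M) (K : Set M) : Set M :=
  ⋃ x ∈ K, jPlus φ x

/-- `K` has only internal explosions (no external explosions): every explosion point
of the basin of attraction lies in `K`. -/
def OnlyInternalExplosions (φ : Flow ℝ M) (K : Set M) : Prop :=
  ∀ x ∈ stableSet φ K \ K, jPlus φ x ⊆ K

/-!
If `y ∈ J⁻(x) \ K` then `x ∈ J⁺(y)`, which already forces `x ∈ K` when `y` lies in the basin.
The engine of the proof: if `x ∈ J⁺(z)`, the forward orbit of `z` stays in an open set `U` and
`x ∉ closure U`, then orbits from near `z` towards `x` leave `U` at times tending to infinity, and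
along an ultrafilter their exit points converge to some `q ∈ frontier U` whose backward orbit
stays in `closure U`; moreover either `x ∈ J⁺(q)` or `x` lies on the forward orbit of `q`.
Take compact neighbourhoods `N₂ ⊆ int N₁` of `K` in the basin with `x ∉ N₂`. With `U = int N₂`
and `z ∈ K`, internal explosions exclude `x ∈ J⁺(q)`, so the backward orbit of `x` eventually
stays in `N₂`. With `U = N₁ᶜ` and `z = y`, whose orbit avoids the basin, applied to a point far
back on the orbit of `x`, both alternatives put `x` in `K`.
-/

open Filter Topology

theorem IsCompact.exists_tendsto_ultrafilter {ι : Type*} {s : Set M} (hs : IsCompact s)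
    {𝒰 : Ultrafilter ι} {f : ι → M} (hf : ∀ᶠ i in 𝒰, f i ∈ s) :
    ∃ a ∈ s, Tendsto f 𝒰 (𝓝 a) :=
  hs.ultrafilter_le_nhds' (𝒰.map f) hf

theorem exists_first_exit {γ : ℝ → M} (hγ : Continuous γ) {U : Set M} (hU : IsOpen U)
    (h0 : γ 0 ∈ U) {T : ℝ} (hT : 0 ≤ T) (hTU : γ T ∉ U) :
    ∃ c ∈ Icc 0 T, γ c ∈ frontier U ∧ ∀ s ∈ Ico 0 c, γ s ∈ U := by
  set E := Icc 0 T ∩ γ ⁻¹' Uᶜ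
  have hE : IsClosed E := isClosed_Icc.inter (hU.isClosed_compl.preimage hγ)
  have hEb : BddBelow E := ⟨0, fun s hs => hs.1.1⟩
  have hc := hE.csInf_mem ⟨T, ⟨hT, le_rfl⟩, hTU⟩ hEb
  have hbefore : ∀ s ∈ Ico 0 (sInf E), γ s ∈ U := fun s hs => by
    by_contra hsU
    exact (csInf_le hEb ⟨⟨hs.1, hs.2.le.trans hc.1.2⟩, hsU⟩).not_gt hs.2
  have hpos : 0 < sInf E := hc.1.1.lt_of_ne fun h => hc.2 (h ▸ h0)
  refine ⟨sInf E, hc.1, ?_, hbefore⟩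
  rw [hU.frontier_eq]
  refine ⟨mem_closure_of_tendsto (b := 𝓝[<] sInf E)
    ((hγ.tendsto _).mono_left nhdsWithin_le_nhds) ?_, hc.2⟩
  filter_upwards [Ioo_mem_nhdsLT hpos] with s hs using hbefore s ⟨hs.1.le, hs.2⟩

section Flow

variable (φ : Flow ℝ M)

theorem flowImage_eq_image (U : Set M) (S : Set ℝ) :
    flowImage φ U S = (fun p : M × ℝ => φ p.2 p.1) '' (U ×ˢ S) := by
  ext y
  simp [flowImage, and_assoc]

theorem mem_jPlus_iff_mapClusterPt {x z : M} :
    x ∈ jPlus φ z ↔ MapClusterPt x (𝓝 z ×ˢ atTop) (fun p : M × ℝ => φ p.2 p.1) := by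
  rw [MapClusterPt, ((nhds_basis_opens z).prod (atTop_basis' 0)).map _
    |>.clusterPt_iff_forall_mem_closure]
  simp only [jPlus, jPlusRel, IsRelOpenNbhd, mem_iInter, flowImage_eq_image, inter_univ,
    Prod.forall, and_assoc]
  constructor
  · rintro h U t ⟨hzU, hU, ht⟩
    exact h U ⟨hzU, U, hU, rfl⟩ t ht
  · rintro h U ⟨hzU, V, hV, rfl⟩ t ht
    exact h U t ⟨hzU, hV, ht⟩

theorem mem_jPlus_of_tendsto {ι : Type*} {l : Filter ι} [l.NeBot] {p : ι → M} {r : ι → ℝ}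
    {x z : M} (hp : Tendsto p l (𝓝 z)) (hr : Tendsto r l atTop)
    (hx : Tendsto (fun i => φ (r i) (p i)) l (𝓝 x)) : x ∈ jPlus φ z :=
  (mem_jPlus_iff_mapClusterPt φ).2 <| MapClusterPt.of_comp (hp.prodMk hr) hx.mapClusterPt

theorem exists_ultrafilter_of_mem_jPlus {x z : M} (h : x ∈ jPlus φ z) :
    ∃ 𝒰 : Ultrafilter (M × ℝ), Tendsto Prod.fst (𝒰 : Filter (M × ℝ)) (𝓝 z) ∧
      Tendsto Prod.snd (𝒰 : Filter (M × ℝ)) atTop ∧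
      Tendsto (fun p : M × ℝ => φ p.2 p.1) 𝒰 (𝓝 x) := by
  obtain ⟨𝒰, h𝒰, hx⟩ := mapClusterPt_iff_ultrafilter.1 ((mem_jPlus_iff_mapClusterPt φ).1 h)
  exact ⟨𝒰, tendsto_fst.mono_left h𝒰, tendsto_snd.mono_left h𝒰, hx⟩

theorem flow_mem_jPlus {x z : M} (h : x ∈ jPlus φ z) (t : ℝ) : φ t x ∈ jPlus φ z := by
  obtain ⟨𝒰, hp, hr, hx⟩ := exists_ultrafilter_of_mem_jPlus φ h
  refine mem_jPlus_of_tendsto φ hp (tendsto_atTop_add_const_left _ t hr) ?_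
  simpa only [Function.comp_def, Flow.map_add] using ((φ.continuous_toFun t).tendsto x).comp hx

theorem jMinus_eq_jPlus_reverse (x : M) : jMinus φ x = jPlus φ.reverse x := by
  have h : ∀ U t, flowImage φ U (Iic (-t)) = flowImage φ.reverse U (Ici t) := by
    intro U t
    ext y
    constructor
    · rintro ⟨p, hp, s, hs, rfl⟩
      exact ⟨p, hp, -s, le_neg_of_le_neg (mem_Iic.1 hs), by simp [Flow.reverse_apply]⟩
    · rintro ⟨p, hp, s, hs, rfl⟩
      exact ⟨p, hp, -s, neg_le_neg (mem_Ici.1 hs), rfl⟩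
  simp only [jMinus, jMinusRel, jPlus, jPlusRel, h]

theorem mem_jPlus_of_mem_jMinus {x y : M} (h : y ∈ jMinus φ x) : x ∈ jPlus φ y := by
  rw [jMinus_eq_jPlus_reverse] at h
  obtain ⟨𝒰, hp, hr, hy⟩ := exists_ultrafilter_of_mem_jPlus φ.reverse h
  refine mem_jPlus_of_tendsto φ hy hr ?_
  simpa only [Flow.reverse_apply, ← Flow.map_add, add_neg_cancel, Flow.map_zero_apply] using hp

theorem omegaSet_flow (s : ℝ) (y : M) : omegaSet φ (φ s y) = omegaSet φ y := by
  have h : ∀ t, flowImage φ {φ s y} (Ici t) = flowImage φ {y} (Ici (t + s)) := by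
    intro t
    simp only [flowImage, mem_singleton_iff, exists_eq_left, ← Flow.map_add]
    ext w
    constructor
    · rintro ⟨r, hr, rfl⟩
      exact ⟨r + s, by simpa using hr, rfl⟩
    · rintro ⟨r, hr, rfl⟩
      exact ⟨r - s, le_sub_iff_add_le.2 (mem_Ici.1 hr), by rw [sub_add_cancel]⟩
  simp only [omegaSet, h]
  exact (Equiv.addRight s).surjective.iInter_comp (fun t => closure (flowImage φ {y} (Ici t)))

theorem flow_mem_stableSet_iff {K : Set M} {s : ℝ} {y : M} :
    φ s y ∈ stableSet φ K ↔ y ∈ stableSet φ K := by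
  simp only [stableSet, mem_ofPred_eq, omegaSet_flow]

theorem eventually_forall_flow_mem {U : Set M} (hU : IsOpen U) {z : M} {C : ℝ}
    (h : ∀ s ∈ Icc 0 C, φ s z ∈ U) : ∀ᶠ w in 𝓝 z, ∀ s ∈ Icc 0 C, φ s w ∈ U :=
  isCompact_Icc.eventually_forall_of_forall_eventually fun s hs =>
    (φ.continuous continuous_snd continuous_fst).continuousAt.preimage_mem_nhds
      (hU.mem_nhds (h s hs))

theorem exists_exit_times {ι : Type*} {l : Filter ι} {U : Set M} (hU : IsOpen U) {z : M}
    (hz : ∀ s, 0 ≤ s → φ s z ∈ U) {p : ι → M} {r : ι → ℝ} (hp : Tendsto p l (𝓝 z))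
    (hr : ∀ᶠ i in l, 0 ≤ r i ∧ φ (r i) (p i) ∉ U) :
    ∃ c : ι → ℝ, Tendsto c l atTop ∧ ∀ᶠ i in l, c i ≤ r i ∧ φ (c i) (p i) ∈ frontier U ∧
      ∀ s ∈ Ico 0 (c i), φ s (p i) ∈ U := by
  have hexit : ∀ i, ∃ c, p i ∈ U → 0 ≤ r i → φ (r i) (p i) ∉ U →
      c ∈ Icc 0 (r i) ∧ φ c (p i) ∈ frontier U ∧ ∀ s ∈ Ico 0 c, φ s (p i) ∈ U := by
    intro i
    by_cases h : p i ∈ U ∧ 0 ≤ r i ∧ φ (r i) (p i) ∉ U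
    · obtain ⟨c, hc⟩ := exists_first_exit (γ := fun s => φ s (p i))
        (φ.continuous continuous_id continuous_const) hU
        (by rw [Flow.map_zero_apply]; exact h.1) h.2.1 h.2.2
      exact ⟨c, fun _ _ _ => hc⟩
    · exact ⟨0, fun h₁ h₂ h₃ => absurd ⟨h₁, h₂, h₃⟩ h⟩
  choose c hc using hexit
  have hzU : z ∈ U := φ.map_zero_apply z ▸ hz 0 le_rfl
  have hgood : ∀ᶠ i in l, c i ∈ Icc 0 (r i) ∧ φ (c i) (p i) ∈ frontier U ∧
      ∀ s ∈ Ico 0 (c i), φ s (p i) ∈ U := by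
    filter_upwards [hp.eventually (hU.mem_nhds hzU), hr] with i h₁ h₂ using hc i h₁ h₂.1 h₂.2
  refine ⟨c, tendsto_atTop.2 fun C => ?_, hgood.mono fun i hi => ⟨hi.1.2, hi.2⟩⟩
  filter_upwards [hp.eventually (eventually_forall_flow_mem φ hU fun s hs => hz s hs.1), hgood]
    with i hi hci
  by_contra hC
  exact (hU.frontier_eq ▸ hci.2.1).2 (hi (c i) ⟨hci.1.1, (not_le.1 hC).le⟩)

variable [T2Space M]

theorem mem_jPlus_or_exists_flow_eq {ι : Type*} {𝒰 : Ultrafilter ι} {q : ι → M} {r : ι → ℝ}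
    {q₀ x : M} (hq : Tendsto q 𝒰 (𝓝 q₀)) (hr : ∀ᶠ i in 𝒰, 0 ≤ r i)
    (hx : Tendsto (fun i => φ (r i) (q i)) 𝒰 (𝓝 x)) :
    x ∈ jPlus φ q₀ ∨ ∃ d, 0 ≤ d ∧ φ d q₀ = x := by
  by_cases hr_top : Tendsto r 𝒰 atTop
  · exact .inl (mem_jPlus_of_tendsto φ hq hr_top hx)
  obtain ⟨T, hT⟩ : ∃ T, ∀ᶠ i in 𝒰, r i < T := by
    simpa [tendsto_atTop, Ultrafilter.eventually_not] using hr_top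
  obtain ⟨d, hd, hrd⟩ := (isCompact_Icc (a := 0) (b := T)).exists_tendsto_ultrafilter
    ((hr.and hT).mono fun i h => ⟨h.1, h.2.le⟩)
  exact .inr ⟨d, hd.1, tendsto_nhds_unique
    (((φ.continuous continuous_fst continuous_snd).tendsto (d, q₀)).comp (hrd.prodMk_nhds hq)) hx⟩

theorem exists_mem_frontier_of_mem_jPlus {U : Set M} (hU : IsOpen U)
    (hUc : IsCompact (frontier U)) {z x : M} (hz : ∀ s, 0 ≤ s → φ s z ∈ U)
    (hx : x ∈ jPlus φ z) (hxU : x ∉ closure U) :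
    ∃ q ∈ frontier U, (∀ s, 0 ≤ s → φ (-s) q ∈ closure U) ∧
      (x ∈ jPlus φ q ∨ ∃ d, 0 ≤ d ∧ φ d q = x) := by
  obtain ⟨𝒰, hp, hr, hpx⟩ := exists_ultrafilter_of_mem_jPlus φ hx
  have hout : ∀ᶠ i : M × ℝ in 𝒰, 0 ≤ i.2 ∧ φ i.2 i.1 ∉ U :=
    (hr.eventually_ge_atTop 0).and <| (hpx.eventually
      (isClosed_closure.isOpen_compl.mem_nhds hxU)).mono fun i hi h => hi (subset_closure h)
  obtain ⟨c, hc, hcross⟩ := exists_exit_times φ hU hz hp hout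
  obtain ⟨q, hqU, hq⟩ := hUc.exists_tendsto_ultrafilter (hcross.mono fun i hi => hi.2.1)
  refine ⟨q, hqU, fun s hs => ?_, mem_jPlus_or_exists_flow_eq φ hq
    (hcross.mono fun i hi => sub_nonneg.2 hi.1) ?_⟩
  · refine isClosed_closure.mem_of_tendsto (((φ.continuous_toFun (-s)).tendsto q).comp hq) ?_
    filter_upwards [hc.eventually_gt_atTop s, hcross] with i hsc hi
    simp only [Function.comp_apply, ← Flow.map_add]
    rcases hs.eq_or_lt with rfl | hs
    · simpa using frontier_subset_closure hi.2.1
    · exact subset_closure (hi.2.2 _ ⟨by linarith, by linarith⟩)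
  · simpa only [← Flow.map_add, sub_add_cancel] using hpx

end Flow

section Attractor

variable {φ : Flow ℝ M} {K N : Set M} [T2Space M]

theorem OnlyInternalExplosions.eventually_flow_neg_mem (hint : OnlyInternalExplosions φ K)
    (hKinv : FlowInvariant φ K) (hN : IsCompact N) (hNA : N ⊆ stableSet φ K)
    (hKN : K ⊆ interior N) {z x : M} (hz : z ∈ K) (hx : x ∈ jPlus φ z) (hxN : x ∉ N) :
    ∀ᶠ s in atTop, φ (-s) x ∈ N := by
  have hclN : closure (interior N) ⊆ N := closure_minimal interior_subset hN.isClosed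
  obtain ⟨q, hq, hback, hxq⟩ := exists_mem_frontier_of_mem_jPlus φ isOpen_interior
    (hN.of_isClosed_subset isClosed_frontier (frontier_subset_closure.trans hclN))
    (fun s _ => hKN (hKinv s z hz)) hx (fun h => hxN (hclN h))
  have hqA : q ∈ stableSet φ K \ K := ⟨hNA (hclN (frontier_subset_closure hq)),
    fun h => hq.2 (by rw [interior_interior]; exact hKN h)⟩
  obtain ⟨d, -, rfl⟩ := hxq.resolve_left fun h => hxN (interior_subset (hKN (hint q hqA h)))
  filter_upwards [eventually_ge_atTop d] with s hs
  rw [← Flow.map_add, show -s + d = -(s - d) by ring]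
  exact hclN (hback _ (sub_nonneg.2 hs))

theorem OnlyInternalExplosions.mem_of_mem_jPlus (hint : OnlyInternalExplosions φ K)
    (hN : IsCompact N) (hNA : N ⊆ stableSet φ K) (hKN : K ⊆ interior N) {x y : M} (hy : y ∉ K)
    (hx : x ∈ jPlus φ y) (hback : ∀ᶠ s in atTop, φ (-s) x ∈ interior N) : x ∈ K := by
  by_cases hyA : y ∈ stableSet φ K
  · exact hint y ⟨hyA, hy⟩ hx
  obtain ⟨d, hd⟩ := eventually_atTop.1 hback
  obtain ⟨q, hq, -, hxq⟩ := exists_mem_frontier_of_mem_jPlus φ hN.isClosed.isOpen_compl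
    (by rw [frontier_compl]
        exact hN.of_isClosed_subset isClosed_frontier hN.isClosed.frontier_subset)
    (fun s _ h => hyA ((flow_mem_stableSet_iff φ).1 (hNA h))) (flow_mem_jPlus φ hx (-d))
    (by rw [closure_compl, notMem_compl_iff]; exact hd d le_rfl)
  rw [frontier_compl] at hq
  have hqA : q ∈ stableSet φ K \ K :=
    ⟨hNA (hN.isClosed.frontier_subset hq), fun h => hq.2 (hKN h)⟩
  rcases hxq with hxq | ⟨e, he, hqx⟩
  · simpa [← Flow.map_add] using hint q hqA (flow_mem_jPlus φ hxq d)
  · refine absurd (hd (e + d) (by linarith)) ?_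
    rw [show -(e + d) = -e + -d by ring, Flow.map_add, ← hqx, ← Flow.map_add, neg_add_cancel,
      Flow.map_zero_apply]
    exact hq.2

end Attractor

/-- Let `φ` be a continuous flow on a locally compact metric space
`M` and `K` an isolated attractor with only internal explosions, i.e. `J⁺(x) ⊆ K` for
every `x` in the basin of attraction `𝒜(K)` with `x ∉ K`.  Then `J⁻(x) ⊆ K` for every
`x ∈ K̂ ∖ K`, where `K̂` is the stabilization of `K`. -/
theorem jMinus_subset_of_onlyInternalExplosions {M : Type} [MetricSpace M]
    [LocallyCompactSpace M] (φ : Flow ℝ M) (K : Set M)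
    (hK : IsIsolatedAttractor φ K) (hint : OnlyInternalExplosions φ K) :
    ∀ x ∈ stabilization φ K \ K, jMinus φ x ⊆ K := by
  obtain ⟨⟨hKc, hKinv, -⟩, hA⟩ := hK
  rintro x ⟨hxKs, hxK⟩ y hy
  obtain ⟨z, hz, hxz⟩ := mem_iUnion₂.1 hxKs
  by_contra hyK
  obtain ⟨N₁, hN₁, hKN₁, hN₁A⟩ :=
    exists_compact_between hKc isOpen_interior (subset_interior_iff_mem_nhdsSet.2 hA)
  obtain ⟨N₂, hN₂, hKN₂, hN₂N₁⟩ := exists_compact_between hKc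
    (isOpen_interior.inter isOpen_compl_singleton)
    (subset_inter hKN₁ fun k hk (hkx : k = x) => hxK (hkx ▸ hk))
  have hback := hint.eventually_flow_neg_mem hKinv hN₂
    (fun p hp => interior_subset (hN₁A (interior_subset (hN₂N₁ hp).1))) hKN₂ hz hxz
    (fun h => (hN₂N₁ h).2 rfl)
  exact hxK (hint.mem_of_mem_jPlus hN₁ (hN₁A.trans interior_subset) hKN₁ hyK
    (mem_jPlus_of_mem_jMinus φ hy) (hback.mono fun s hs => (hN₂N₁ hs).1))
end

section
/- Let φ be a continuous flow on a locally compact metric space M and K an isolated attractor such that J⁻(x) ⊆ K for all x ∈ K̂ \ K, where K̂ is the stabilization of K. Then K̂ equals the unstable manifold W^u(K) = {x ∈ M : ∅ ≠ α(x) ⊆ K}. -/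
open Set

variable {M : Type} [TopologicalSpace M]

lemma flowImage_mono {φ : Flow ℝ M} {A B : Set M} {S S' : Set ℝ} (hAB : A ⊆ B)
    (hS : S ⊆ S') : flowImage φ A S ⊆ flowImage φ B S' := by
  rintro y ⟨x, hx, t, ht, rfl⟩
  exact ⟨x, hAB hx, t, hS ht, rfl⟩

/-- Uniform return-time bound: every point of a compact subset `C` of the basin of
attraction (with `K ⊆ interior C`) re-enters `interior C` within a uniformly bounded
positive time. -/
lemma exists_uniform_return_time {M : Type} [MetricSpace M]
    (φ : Flow ℝ M) (K C : Set M) (hC : IsCompact C)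
    (hKC : K ⊆ interior C) (hCS : C ⊆ stableSet φ K) :
    ∃ T : ℝ, 0 ≤ T ∧ ∀ u ∈ C, ∃ r : ℝ, 0 < r ∧ r ≤ T ∧ φ r u ∈ interior C := by
  by_contra hcon
  push_neg at hcon
  have h' : ∀ n : ℕ, ∃ u ∈ C, ∀ r : ℝ, 0 < r → r ≤ (n : ℝ) → φ r u ∉ interior C := by
    intro n
    obtain ⟨u, hu, hr⟩ := hcon (n : ℝ) (Nat.cast_nonneg n)
    exact ⟨u, hu, fun r h1 h2 => hr r h1 h2⟩
  choose u huC hu using h'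
  obtain ⟨z, hzC, ψ, hψ, hlim⟩ := hC.tendsto_subseq huC
  have hout : ∀ r : ℝ, 0 < r → φ r z ∉ interior C := by
    intro r hr
    have hcont : Filter.Tendsto (fun k => φ r (u (ψ k))) Filter.atTop (nhds (φ r z)) :=
      ((φ.continuous continuous_const continuous_id).tendsto z).comp hlim
    have hev : ∀ᶠ k in Filter.atTop, φ r (u (ψ k)) ∈ (interior C)ᶜ := by
      filter_upwards [Filter.eventually_ge_atTop (Nat.ceil r)] with k hk
      have hrk : r ≤ (ψ k : ℝ) := by
        calc r ≤ (Nat.ceil r : ℝ) := Nat.le_ceil r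
        _ ≤ (k : ℝ) := by exact_mod_cast hk
        _ ≤ (ψ k : ℝ) := by exact_mod_cast hψ.le_apply
      exact hu (ψ k) r hr hrk
    exact (isOpen_interior.isClosed_compl.mem_of_tendsto hcont hev)
  -- but z is in the basin, so its forward orbit accumulates on K ⊆ interior C
  obtain ⟨hωne, hωK⟩ := hCS hzC
  obtain ⟨w, hw⟩ := hωne
  have hwK : w ∈ interior C := hKC (hωK hw)
  have hw1 : w ∈ closure (flowImage φ {z} (Ici (1 : ℝ))) := by
    have := mem_iInter.1 hw (1 : ℝ); exact this
  obtain ⟨p, hpU, hpF⟩ := mem_closure_iff.1 hw1 (interior C) isOpen_interior hwK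
  obtain ⟨z', hz', r, hr, rfl⟩ := hpF
  rcases hz' with rfl
  exact hout r (lt_of_lt_of_le one_pos hr) hpU

/-- Key compactness lemma: there is a compact set `P` containing the whole backward
orbit of any point of `jPlus φ x`, `x ∈ K`. -/
lemma exists_compact_backward_orbit {M : Type} [MetricSpace M] [LocallyCompactSpace M]
    (φ : Flow ℝ M) (K : Set M) (hKc : IsCompact K)
    (hbasin : stableSet φ K ∈ nhdsSet K) :
    ∃ P : Set M, IsCompact P ∧
      ∀ x ∈ K, ∀ y ∈ jPlus φ x, ∀ s : ℝ, 0 ≤ s → φ (-s) y ∈ P := by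
  have hKint : K ⊆ interior (stableSet φ K) := subset_interior_iff_mem_nhdsSet.2 hbasin
  obtain ⟨C, hC, hKC, hCS'⟩ :=
    exists_compact_between hKc isOpen_interior hKint
  have hCS : C ⊆ stableSet φ K := hCS'.trans interior_subset
  obtain ⟨T, hT0, hT⟩ := exists_uniform_return_time φ K C hC hKC hCS
  set P : Set M := (Function.uncurry φ.toFun) '' (Icc (0 : ℝ) T ×ˢ C) with hPdef
  have hPc : IsCompact P := (isCompact_Icc.prod hC).image φ.cont'
  refine ⟨P, hPc, ?_⟩
  -- first: the forward orbit of C stays in P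
  have habs : ∀ u ∈ C, ∀ t : ℝ, 0 ≤ t → φ t u ∈ P := by
    intro u hu t ht
    by_cases hin : φ t u ∈ C
    · exact ⟨(0, φ t u), ⟨⟨le_refl 0, hT0⟩, hin⟩, φ.map_zero_apply _⟩
    · -- last exit time from C
      set S : Set ℝ := Icc 0 t ∩ (fun s => φ s u) ⁻¹' C with hSdef
      have hS0 : (0 : ℝ) ∈ S := ⟨⟨le_refl 0, ht⟩, by simpa [φ.map_zero_apply] using hu⟩
      have hSne : S.Nonempty := ⟨0, hS0⟩
      have hSbdd : BddAbove S := ⟨t, fun s hs => hs.1.2⟩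
      have hScl : IsClosed S :=
        isClosed_Icc.inter (hC.isClosed.preimage (φ.continuous continuous_id continuous_const))
      have hsS : sSup S ∈ S := hScl.csSup_mem hSne hSbdd
      set s₀ := sSup S with hs₀def
      have hs₀t : s₀ ≤ t := hsS.1.2
      have hs₀0 : 0 ≤ s₀ := hsS.1.1
      have hs₀C : φ s₀ u ∈ C := hsS.2
      have hs₀lt : s₀ < t := by
        rcases lt_or_eq_of_le hs₀t with h' | h'
        · exact h'
        · exact absurd (h' ▸ hs₀C) hin
      -- after s₀, the orbit stays outside C until t
      have hnot : ∀ r : ℝ, 0 < r → r ≤ t - s₀ → φ r (φ s₀ u) ∉ interior C := by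
        intro r hr hrt hmem
        have hrs : r + s₀ ∈ S := by
          refine ⟨⟨by linarith, by linarith⟩, ?_⟩
          have : φ (r + s₀) u = φ r (φ s₀ u) := φ.map_add r s₀ u
          rw [Set.mem_preimage, this]
          exact interior_subset hmem
        have : r + s₀ ≤ s₀ := le_csSup hSbdd hrs
        linarith
      have hτT : t - s₀ ≤ T := by
        by_contra hgt
        push_neg at hgt
        obtain ⟨r, hr0, hrT, hrin⟩ := hT (φ s₀ u) hs₀C
        exact hnot r hr0 (le_of_lt (lt_of_le_of_lt hrT hgt)) hrin
      refine ⟨(t - s₀, φ s₀ u), ⟨⟨show (0:ℝ) ≤ t - s₀ by linarith, hτT⟩, hs₀C⟩, ?_⟩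
      show φ (t - s₀) (φ s₀ u) = φ t u
      rw [← φ.map_add]
      norm_num
  have hPcl : IsClosed P := hPc.isClosed
  -- now the main claim
  intro x hx y hy s hs
  have hUC : IsRelOpenNbhd univ x (interior C) :=
    ⟨hKC hx, interior C, isOpen_interior, (inter_univ _).symm⟩
  have hy' : y ∈ closure (flowImage φ (interior C) (Ici s)) := by
    have := mem_iInter.1 (mem_iInter.1 (mem_iInter.1 (mem_iInter.1 hy (interior C)) hUC) s) hs
    exact this
  have himg : φ (-s) y ∈ closure ((fun z => φ (-s) z) '' flowImage φ (interior C) (Ici s)) :=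
    image_closure_subset_closure_image (φ.continuous continuous_const continuous_id)
      (mem_image_of_mem _ hy')
  have hsub : (fun z => φ (-s) z) '' flowImage φ (interior C) (Ici s) ⊆ P := by
    rintro _ ⟨_, ⟨u, hu, r, hr, rfl⟩, rfl⟩
    show φ (-s) (φ r u) ∈ P
    rw [(φ.map_add (-s) r u).symm]
    exact habs u (interior_subset hu) (-s + r) (by simp only [mem_Ici] at hr; linarith)
  exact (closure_minimal hsub hPcl) himg

/-- Let `φ` be a continuous flow on a locally compact metric space
`M` and `K` an isolated attractor such that `J⁻(x) ⊆ K` for all `x ∈ K̂ ∖ K`, where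
`K̂` is the stabilization of `K`.  Then `K̂` equals the unstable manifold
`W^u(K) = {x ∈ M : ∅ ≠ α(x) ⊆ K}`. -/
theorem stabilization_eq_unstable {M : Type} [MetricSpace M] [LocallyCompactSpace M]
    (φ : Flow ℝ M) (K : Set M) (hK : IsIsolatedAttractor φ K)
    (h : ∀ x ∈ stabilization φ K \ K, jMinus φ x ⊆ K) :
    stabilization φ K = unstableSet φ K := by
  obtain ⟨⟨hKc, hKinv, _N, _hNc, _hNn, _hNiso⟩, hbasin⟩ := hK
  obtain ⟨P, hPc, hP⟩ := exists_compact_backward_orbit φ K hKc hbasin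
  apply Set.Subset.antisymm
  · -- stabilization ⊆ unstableSet
    intro y hy
    obtain ⟨x, hxK, hyJ⟩ := mem_iUnion₂.1 hy
    -- the backward orbit of y lies in the compact set P
    have hback : ∀ s : ℝ, s ≤ 0 → φ s y ∈ P := by
      intro s hs
      have := hP x hxK y hyJ (-s) (by linarith)
      simpa using this
    -- alpha limit set of y is nonempty
    have hAn : ∀ n : ℕ, closure (flowImage φ {y} (Iic (-(n : ℝ)))) ⊆ P := by
      intro n
      refine closure_minimal ?_ hPc.isClosed
      rintro _ ⟨z, hz, s, hs, rfl⟩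
      rcases hz with rfl
      exact hback s (le_trans hs (neg_nonpos.2 (Nat.cast_nonneg n)))
    have hAne : ∀ n : ℕ, (closure (flowImage φ {y} (Iic (-(n : ℝ))))).Nonempty :=
      fun n => ⟨φ (-(n : ℝ)) y, subset_closure ⟨y, rfl, -(n : ℝ), self_mem_Iic, rfl⟩⟩
    have hαne : (alphaSet φ y).Nonempty := by
      have hmono : ∀ n : ℕ, closure (flowImage φ {y} (Iic (-((n + 1 : ℕ) : ℝ)))) ⊆
          closure (flowImage φ {y} (Iic (-(n : ℝ)))) := by
        intro n
        apply closure_mono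
        apply flowImage_mono (Set.Subset.refl _)
        apply Iic_subset_Iic.2
        push_cast; linarith
      obtain ⟨z, hz⟩ := IsCompact.nonempty_iInter_of_sequence_nonempty_isCompact_isClosed
        (fun n : ℕ => closure (flowImage φ {y} (Iic (-(n : ℝ))))) hmono hAne
        (hPc.of_isClosed_subset isClosed_closure (hAn 0)) (fun _ => isClosed_closure)
      refine ⟨z, mem_iInter.2 fun t => ?_⟩
      obtain ⟨n, hn⟩ := exists_nat_ge (-t)
      have hzn := mem_iInter.1 hz n
      refine closure_mono (flowImage_mono (Set.Subset.refl _) (Iic_subset_Iic.2 ?_)) hzn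
      linarith
    refine ⟨hαne, ?_⟩
    -- alpha limit set is contained in K
    by_cases hyK : y ∈ K
    · -- orbit of y stays in K
      intro z hz
      have hz0 := mem_iInter.1 hz (0 : ℝ)
      have : closure (flowImage φ {y} (Iic (0 : ℝ))) ⊆ K := by
        refine closure_minimal ?_ hKc.isClosed
        rintro _ ⟨w, hw, s, _, rfl⟩
        rw [mem_singleton_iff] at hw
        rw [hw]
        exact hKinv s y hyK
      exact this hz0
    · -- use the hypothesis on J⁻
      have hyS : y ∈ stabilization φ K \ K := ⟨hy, hyK⟩
      refine subset_trans ?_ (h y hyS)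
      -- alphaSet ⊆ jMinus
      intro z hz
      simp only [jMinus, jMinusRel, mem_iInter]
      intro U hU t _
      have hyU : y ∈ U := hU.1
      have := mem_iInter.1 hz (-t)
      exact closure_mono (flowImage_mono (singleton_subset_iff.2 hyU) (Set.Subset.refl _)) this
  · -- unstableSet ⊆ stabilization
    rintro y ⟨⟨x, hxα⟩, hαK⟩
    have hxK : x ∈ K := hαK hxα
    refine mem_iUnion₂.2 ⟨x, hxK, ?_⟩
    simp only [jPlus, jPlusRel, mem_iInter]
    intro U hU t ht
    obtain ⟨hxU, V, hV, hUV⟩ := hU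
    have hUopen : IsOpen U := by rw [hUV, inter_univ]; exact hV
    have hx' : x ∈ closure (flowImage φ {y} (Iic (-t))) := mem_iInter.1 hxα (-t)
    obtain ⟨p, hpU, hpF⟩ := mem_closure_iff.1 hx' U hUopen hxU
    obtain ⟨z, hz, s, hs, rfl⟩ := hpF
    rw [mem_singleton_iff] at hz
    rw [hz] at hpU
    refine subset_closure ⟨φ s y, hpU, -s, ?_, ?_⟩
    · simp only [mem_Iic] at hs
      simp only [mem_Ici]
      linarith
    · rw [← φ.map_add, neg_add_cancel, φ.map_zero_apply]
end
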